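/- Let a⃗ and b⃗ be unit vectors in ℝ³, and let A_± = (1 ± a⃗·σ⃗)/2, B_± = (1 ± b⃗·σ⃗)/2 be the corresponding rank-1 projective measurements on ℂ², where σ⃗ = (σ_x, σ_y, σ_z) are the Pauli matrices. Then the two-copy estimation fidelity F = (1/24)·Σ_{s,t ∈ {±}} ‖Q(A_s ⊗ B_t)‖, with Q(A⊗B) = tr(A)tr(B) + tr(AB) + tr(B)A + tr(A)B + AB + BA, equals (3 + √(1 + |a⃗ × b⃗|))/6. In particular F ≥ 2/3, with equality iff a⃗ and b⃗ are parallel or antiparallel. -/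

import Mathlib

open scoped Matrix.Norms.L2Operator

/-- The operator `Q(A⊗B) = tr(A)tr(B)·1 + tr(AB)·1 + tr(B)·A + tr(A)·B + AB + BA`. -/
noncomputable def Qop (A B : Matrix (Fin 2) (Fin 2) ℂ) : Matrix (Fin 2) (Fin 2) ℂ :=
  (A.trace * B.trace) • (1 : Matrix (Fin 2) (Fin 2) ℂ) +
    (A * B).trace • (1 : Matrix (Fin 2) (Fin 2) ℂ) +
    B.trace • A + A.trace • B + A * B + B * A

/-- `a⃗·σ⃗` for a real 3-vector `a⃗` and the Pauli matrices. -/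
noncomputable def pauliDot (a : Fin 3 → ℝ) : Matrix (Fin 2) (Fin 2) ℂ :=
  (a 0 : ℂ) • !![0, 1; 1, 0] +
    (a 1 : ℂ) • !![0, -Complex.I; Complex.I, 0] +
    (a 2 : ℂ) • !![1, 0; 0, -1]

/-- The projector `(1 + s a⃗·σ⃗)/2` (s = ±1). -/
noncomputable def blochProj (s : ℝ) (a : Fin 3 → ℝ) : Matrix (Fin 2) (Fin 2) ℂ :=
  ((1 : ℂ) / 2) • ((1 : Matrix (Fin 2) (Fin 2) ℂ) + (s : ℂ) • pauliDot a)

/-- The cross product of two 3-vectors. -/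
def cross3 (a b : Fin 3 → ℝ) : Fin 3 → ℝ :=
  ![a 1 * b 2 - a 2 * b 1, a 2 * b 0 - a 0 * b 2, a 0 * b 1 - a 1 * b 0]

/-- Two-copy estimation fidelity of the product of the two rank-1 projective
measurements with Bloch vectors `±a⃗`, `±b⃗`. -/
noncomputable def fid2 (a b : Fin 3 → ℝ) : ℝ :=
  (1 / 24) * (‖Qop (blochProj 1 a) (blochProj 1 b)‖ +
    ‖Qop (blochProj 1 a) (blochProj (-1) b)‖ +
    ‖Qop (blochProj (-1) a) (blochProj 1 b)‖ +
    ‖Qop (blochProj (-1) a) (blochProj (-1) b)‖)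

/-!
Write `A = (1 + X)/2`, `B = (1 + Y)/2` with `X`, `Y` traceless and `XY + YX = 2c`; then
`Q(A ⊗ B) = (3 + c) + X + Y`. For `X = ±a⃗·σ⃗`, `Y = ±b⃗·σ⃗` this is `(3 ± a⃗·b⃗) + (±a⃗ ± b⃗)·σ⃗`.
Since `v⃗·σ⃗` is Hermitian with square `|v⃗|²`, the operator `α + v⃗·σ⃗` (`α ≥ 0`) has eigenvalues
`α ± |v⃗|` and norm `α + |v⃗|`. The four norms add up to `12 + 2(√(2+2c) + √(2−2c))` with
`c = a⃗·b⃗`, and squaring gives `√(2+2c) + √(2−2c) = 2√(1 + √(1−c²))`, where `1 − c² = |a⃗ × b⃗|²`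
by Lagrange's identity. The cross product vanishes iff `c = ±1`, i.e. iff `b⃗ = ±a⃗`.
-/

open Complex Matrix

lemma norm_le_norm_of_mul_eq_smul {𝕜 R : Type*} [NormedField 𝕜] [NormedRing R]
    [NormedSpace 𝕜 R] {M P : R} {c : 𝕜} (hP : P ≠ 0) (h : M * P = c • P) : ‖c‖ ≤ ‖M‖ := by
  refine le_of_mul_le_mul_right ?_ (norm_pos_iff.2 hP)
  calc ‖c‖ * ‖P‖ = ‖M * P‖ := by rw [h, norm_smul]
    _ ≤ ‖M‖ * ‖P‖ := norm_mul_le M P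

lemma sum_mul_add_mul_sq {ι : Type*} [Fintype ι] (s t : ℝ) (a b : ι → ℝ) :
    ∑ i, (s * a i + t * b i) ^ 2
      = s ^ 2 * ∑ i, a i ^ 2 + t ^ 2 * ∑ i, b i ^ 2 + 2 * s * t * ∑ i, a i * b i := by
  simp only [Finset.mul_sum, ← Finset.sum_add_distrib]
  exact Finset.sum_congr rfl fun i _ ↦ by ring

lemma sq_sum_mul_le_one {ι : Type*} [Fintype ι] {a b : ι → ℝ}
    (ha : ∑ i, a i ^ 2 = 1) (hb : ∑ i, b i ^ 2 = 1) : (∑ i, a i * b i) ^ 2 ≤ 1 := by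
  simpa [ha, hb] using Finset.sum_mul_sq_le_sq_mul_sq Finset.univ a b

lemma eq_iff_sum_mul_eq_one {ι : Type*} [Fintype ι] {a b : ι → ℝ}
    (ha : ∑ i, a i ^ 2 = 1) (hb : ∑ i, b i ^ 2 = 1) : b = a ↔ ∑ i, a i * b i = 1 := by
  have hdist := sum_mul_add_mul_sq 1 (-1) b a
  simp only [one_mul, neg_one_mul, ← sub_eq_add_neg, ha, hb, mul_comm (b _)] at hdist
  calc b = a ↔ (fun i ↦ (b i - a i) ^ 2) = 0 := by simp [funext_iff, sub_eq_zero]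
    _ ↔ ∑ i, (b i - a i) ^ 2 = 0 :=
      (Fintype.sum_eq_zero_iff_of_nonneg fun i ↦ sq_nonneg (b i - a i)).symm
    _ ↔ ∑ i, a i * b i = 1 := by rw [hdist]; constructor <;> intro h <;> linarith

lemma sqrt_two_add_add_sqrt_two_sub {c : ℝ} (hc : c ^ 2 ≤ 1) :
    √(2 + 2 * c) + √(2 - 2 * c) = 2 * √(1 + √(1 - c ^ 2)) := by
  have hc' : |c| ≤ 1 := (sq_le_one_iff_abs_le_one c).1 hc
  have hp : 0 ≤ 2 + 2 * c := by linarith [neg_abs_le c]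
  have hm : 0 ≤ 2 - 2 * c := by linarith [le_abs_self c]
  have hprod : √(2 + 2 * c) * √(2 - 2 * c) = 2 * √(1 - c ^ 2) := by
    rw [← Real.sqrt_mul hp, show (2 + 2 * c) * (2 - 2 * c) = 2 ^ 2 * (1 - c ^ 2) by ring,
      Real.sqrt_mul (by positivity), Real.sqrt_sq zero_le_two]
  refine (sq_eq_sq₀ (by positivity) (by positivity)).1 ?_
  rw [add_sq, Real.sq_sqrt hp, Real.sq_sqrt hm, mul_pow, Real.sq_sqrt (by positivity)]
  linear_combination 2 * hprod

lemma Qop_half_one_add {X Y : Matrix (Fin 2) (Fin 2) ℂ} {c : ℂ} (hX : X.trace = 0)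
    (hY : Y.trace = 0) (hXY : X * Y + Y * X = (2 * c) • 1) :
    Qop ((1 / 2 : ℂ) • (1 + X)) ((1 / 2 : ℂ) • (1 + Y)) = (3 + c) • 1 + X + Y := by
  have htrace : (X * Y).trace = 2 * c := by
    have := congrArg Matrix.trace hXY
    rw [trace_add, trace_mul_comm Y X, trace_smul, trace_one] at this
    simp only [Fintype.card_fin, Nat.cast_ofNat, smul_eq_mul] at this
    linear_combination this / 2
  have hYX : Y * X = (2 * c) • 1 - X * Y := by rw [← hXY]; abel
  simp only [Qop, trace_smul, trace_add, trace_one, hX, hY, htrace, hYX, smul_mul_smul,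
    mul_add, add_mul, mul_one, one_mul, Fintype.card_fin, Nat.cast_ofNat, mul_zero, add_zero,
    smul_eq_mul, smul_add]
  module

lemma pauliDot_eq (a : Fin 3 → ℝ) :
    pauliDot a = !![(a 2 : ℂ), a 0 - a 1 * I; a 0 + a 1 * I, -a 2] := by
  ext i j
  fin_cases i <;> fin_cases j <;> simp [pauliDot]; ring

lemma trace_pauliDot (a : Fin 3 → ℝ) : (pauliDot a).trace = 0 := by
  simp [pauliDot_eq, trace_fin_two]

lemma isSelfAdjoint_pauliDot (a : Fin 3 → ℝ) : IsSelfAdjoint (pauliDot a) := by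
  rw [IsSelfAdjoint, star_eq_conjTranspose, pauliDot_eq]
  ext i j
  fin_cases i <;> fin_cases j <;> simp [sub_eq_add_neg]

lemma pauliDot_smul_add_smul (s t : ℝ) (a b : Fin 3 → ℝ) :
    pauliDot (s • a + t • b) = (s : ℂ) • pauliDot a + (t : ℂ) • pauliDot b := by
  simp only [pauliDot, Pi.add_apply, Pi.smul_apply, smul_eq_mul]
  push_cast
  module

lemma pauliDot_mul_add_mul_swap (a b : Fin 3 → ℝ) :
    pauliDot a * pauliDot b + pauliDot b * pauliDot a
      = (2 * ((∑ i, a i * b i : ℝ) : ℂ)) • 1 := by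
  rw [pauliDot_eq, pauliDot_eq]
  ext i j
  fin_cases i <;> fin_cases j <;> simp [Fin.sum_univ_three] <;> ring_nf <;> simp [I_sq]

lemma pauliDot_mul_self (a : Fin 3 → ℝ) :
    pauliDot a * pauliDot a = ((∑ i, a i ^ 2 : ℝ) : ℂ) • 1 := by
  have h := pauliDot_mul_add_mul_swap a a
  rw [← two_smul ℂ, mul_smul] at h
  simpa [sq] using smul_right_injective (Matrix (Fin 2) (Fin 2) ℂ) (two_ne_zero (α := ℂ)) h

lemma norm_pauliDot (a : Fin 3 → ℝ) : ‖pauliDot a‖ = √(∑ i, a i ^ 2) := by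
  have h := (isSelfAdjoint_pauliDot a).norm_mul_self
  rw [pauliDot_mul_self, norm_smul, CStarRing.norm_one, mul_one, Complex.norm_real,
    Real.norm_of_nonneg (by positivity)] at h
  rw [h, Real.sqrt_sq (norm_nonneg _)]

lemma norm_smul_one_add_pauliDot {α : ℝ} (hα : 0 ≤ α) (v : Fin 3 → ℝ) :
    ‖(α : ℂ) • (1 : Matrix (Fin 2) (Fin 2) ℂ) + pauliDot v‖ = α + √(∑ i, v i ^ 2) := by
  set r := √(∑ i, v i ^ 2) with hr
  have hupper : ‖(α : ℂ) • (1 : Matrix (Fin 2) (Fin 2) ℂ) + pauliDot v‖ ≤ α + r := by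
    refine (norm_add_le _ _).trans_eq ?_
    rw [norm_smul, CStarRing.norm_one, mul_one, Complex.norm_real, Real.norm_of_nonneg hα,
      norm_pauliDot]
  refine le_antisymm hupper ?_
  rcases (Real.sqrt_nonneg (∑ i, v i ^ 2)).eq_or_lt with hr0 | hr0
  · have : pauliDot v = 0 := norm_eq_zero.1 (by rw [norm_pauliDot, ← hr0])
    rw [this, hr, ← hr0]
    simp [abs_of_nonneg hα]
  · -- `r • 1 + v⃗·σ⃗` is `2r` times the projector onto the `r`-eigenspace of `v⃗·σ⃗`
    have hP : (r : ℂ) • (1 : Matrix (Fin 2) (Fin 2) ℂ) + pauliDot v ≠ 0 := by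
      intro h
      have := congrArg Matrix.trace h
      simp [trace_pauliDot] at this
      exact hr0.ne' this
    have hsq : pauliDot v * pauliDot v = ((r ^ 2 : ℝ) : ℂ) • 1 := by
      rw [pauliDot_mul_self, hr, Real.sq_sqrt (by positivity)]
    have heig : ((α : ℂ) • 1 + pauliDot v) * ((r : ℂ) • 1 + pauliDot v)
        = ((α + r : ℝ) : ℂ) • ((r : ℂ) • 1 + pauliDot v) := by
      simp only [add_mul, mul_add, hsq, mul_one, one_mul, smul_mul_assoc, mul_smul_comm]
      push_cast
      module
    have := norm_le_norm_of_mul_eq_smul hP heig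
    rwa [Complex.norm_real, Real.norm_of_nonneg (add_nonneg hα hr0.le)] at this

lemma Qop_blochProj (s t : ℝ) (a b : Fin 3 → ℝ) :
    Qop (blochProj s a) (blochProj t b)
      = ((3 + s * t * ∑ i, a i * b i : ℝ) : ℂ) • 1 + pauliDot (s • a + t • b) := by
  have hXY : (s : ℂ) • pauliDot a * (t : ℂ) • pauliDot b
      + (t : ℂ) • pauliDot b * (s : ℂ) • pauliDot a
      = (2 * ((s * t * ∑ i, a i * b i : ℝ) : ℂ)) • 1 := by
    rw [smul_mul_smul, smul_mul_smul, mul_comm (t : ℂ), ← smul_add, pauliDot_mul_add_mul_swap,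
      smul_smul]
    push_cast
    ring_nf
  have htrace (u : ℝ) (v : Fin 3 → ℝ) : ((u : ℂ) • pauliDot v).trace = 0 := by
    simp [trace_pauliDot]
  rw [blochProj, blochProj, Qop_half_one_add (htrace s a) (htrace t b) hXY,
    pauliDot_smul_add_smul]
  push_cast
  abel

lemma norm_Qop_blochProj {s t : ℝ} (hs : s ^ 2 = 1) (ht : t ^ 2 = 1) {a b : Fin 3 → ℝ}
    (ha : ∑ i, a i ^ 2 = 1) (hb : ∑ i, b i ^ 2 = 1) :
    ‖Qop (blochProj s a) (blochProj t b)‖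
      = 3 + s * t * ∑ i, a i * b i + √(2 + 2 * (s * t * ∑ i, a i * b i)) := by
  have hdot : |s * t * ∑ i, a i * b i| ≤ 1 := by
    rw [← sq_le_one_iff_abs_le_one, mul_pow, mul_pow, hs, ht, one_mul, one_mul]
    exact sq_sum_mul_le_one ha hb
  have hsum : ∑ i, (s • a + t • b) i ^ 2 = 2 + 2 * (s * t * ∑ i, a i * b i) := by
    simp only [Pi.add_apply, Pi.smul_apply, smul_eq_mul, sum_mul_add_mul_sq, hs, ht, ha, hb]
    ring
  have hα : 0 ≤ 3 + s * t * ∑ i, a i * b i := by linarith [neg_abs_le (s * t * ∑ i, a i * b i)]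
  rw [Qop_blochProj, norm_smul_one_add_pauliDot hα, hsum]

lemma fid2_eq {a b : Fin 3 → ℝ} (ha : ∑ i, a i ^ 2 = 1) (hb : ∑ i, b i ^ 2 = 1) :
    fid2 a b = (3 + √(1 + √(1 - (∑ i, a i * b i) ^ 2))) / 6 := by
  have key := sqrt_two_add_add_sqrt_two_sub (sq_sum_mul_le_one ha hb)
  have h1 : (1 : ℝ) ^ 2 = 1 := one_pow 2
  have h2 : (-1 : ℝ) ^ 2 = 1 := neg_one_sq
  rw [fid2, norm_Qop_blochProj h1 h1 ha hb, norm_Qop_blochProj h1 h2 ha hb,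
    norm_Qop_blochProj h2 h1 ha hb, norm_Qop_blochProj h2 h2 ha hb]
  simp only [one_mul, neg_mul, mul_neg, neg_neg, ← sub_eq_add_neg]
  linarith

lemma sum_cross3_sq (a b : Fin 3 → ℝ) :
    ∑ i, cross3 a b i ^ 2
      = (∑ i, a i ^ 2) * (∑ i, b i ^ 2) - (∑ i, a i * b i) ^ 2 := by
  simp [cross3, Fin.sum_univ_three]
  ring

lemma sum_cross3_sq_eq_zero_iff {a b : Fin 3 → ℝ} (ha : ∑ i, a i ^ 2 = 1)
    (hb : ∑ i, b i ^ 2 = 1) : ∑ i, cross3 a b i ^ 2 = 0 ↔ b = a ∨ b = -a := by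
  have hna : ∑ i, (-a) i ^ 2 = 1 := by simpa using ha
  rw [eq_iff_sum_mul_eq_one ha hb, eq_iff_sum_mul_eq_one hna hb, sum_cross3_sq, ha, hb,
    one_mul, sub_eq_zero, eq_comm, sq_eq_one_iff]
  simp [neg_eq_iff_eq_neg]

/-- for unit Bloch vectors a⃗, b⃗ the two-copy estimation fidelity
equals `(3 + √(1 + |a⃗ × b⃗|))/6`; in particular `F ≥ 2/3`, with equality iff
a⃗ and b⃗ are parallel or antiparallel. -/
theorem stmt_19 (a b : Fin 3 → ℝ)
    (ha : ∑ i, a i ^ 2 = 1) (hb : ∑ i, b i ^ 2 = 1) :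
    fid2 a b = (3 + Real.sqrt (1 + Real.sqrt (∑ i, cross3 a b i ^ 2))) / 6 ∧
    2 / 3 ≤ fid2 a b ∧
    (fid2 a b = 2 / 3 ↔ b = a ∨ b = -a) := by
  have hfid : fid2 a b = (3 + √(1 + √(∑ i, cross3 a b i ^ 2))) / 6 := by
    rw [fid2_eq ha hb, sum_cross3_sq, ha, hb, one_mul]
  have hone : 1 ≤ √(1 + √(∑ i, cross3 a b i ^ 2)) :=
    Real.one_le_sqrt.2 (le_add_of_nonneg_right (Real.sqrt_nonneg _))
  refine ⟨hfid, by rw [hfid]; linarith, ?_⟩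
  rw [← sum_cross3_sq_eq_zero_iff ha hb, hfid]
  constructor
  · intro h
    have h' : √(1 + √(∑ i, cross3 a b i ^ 2)) = 1 := by linarith
    rwa [Real.sqrt_eq_one, add_eq_left, Real.sqrt_eq_zero (by positivity)] at h'
  · intro h
    rw [h]
    norm_num
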